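/- arXiv:1211.4534 — 3 statements merged into one kernel-verified Lean document; each statement's English description precedes it below -/
import Mathlib

section
/- Let n ≥ 2, m ≥ 1 and h > 0. Let φ_1,…,φ_n : [0,h] → ℝ be continuous functions, let c_1,…,c_m ∈ [0,1] and b_1,…,b_m > 0 with Σ_{j=1}^m b_j = 1. Let V : ℝ → ℝ be differentiable with V' Lipschitz continuous with constant L_V. Let A ∈ ℝ^{n×n} be invertible with ‖A⁻¹‖_∞ ≤ K (operator norm induced by the sup norm on ℝⁿ). Fix q_k, p_{k−1} ∈ ℝ and define f : ℝⁿ → ℝⁿ by f(w)_1 = q_k, f(w)_p = h·Σ_{j=1}^m b_j V'(Σ_{i=1}^n w_i φ_i(c_j h)) φ_p(c_j h) for p = 2,…,n−1, and f(w)_n = p_{k−1}; define Φ : ℝⁿ → ℝⁿ by Φ(w) = A⁻¹ f(w). If h·K·L_V·max_{1≤j≤m} ( (Σ_{i=1}^n |φ_i(c_j h)|) · max_{2≤p≤n−1} |φ_p(c_j h)| ) < 1, then Φ is a contraction on ℝⁿ with respect to the sup norm; in particular, there exists a unique q ∈ ℝⁿ with A q = f(q), i.e., the internal stage equations of the spectral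 variational integrator have a unique solution. -/
open scoped BigOperators Matrix

/-- **Existence and uniqueness of solutions to the internal stage equations** of a
spectral variational integrator.  The sup norm on `Fin n → ℝ` is the `Pi` norm, and the
hypothesis `hK` expresses `‖A⁻¹‖_∞ ≤ K` for the operator norm induced by the sup norm. -/
theorem spectral_internal_stage_unique_solution
    (n m : ℕ) (hn : 2 ≤ n) (hm : 1 ≤ m) (h : ℝ) (hh : 0 < h)
    (φ : Fin n → ℝ → ℝ) (hφ : ∀ i, ContinuousOn (φ i) (Set.Icc 0 h))
    (c : Fin m → ℝ) (hc : ∀ j, c j ∈ Set.Icc (0 : ℝ) 1)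
    (b : Fin m → ℝ) (hb : ∀ j, 0 < b j) (hbsum : ∑ j, b j = 1)
    (V : ℝ → ℝ) (hV : Differentiable ℝ V)
    (LV : ℝ) (hLV : ∀ x y : ℝ, |deriv V x - deriv V y| ≤ LV * |x - y|)
    (A : Matrix (Fin n) (Fin n) ℝ) (hA : IsUnit A.det)
    (K : ℝ) (hK : ∀ v : Fin n → ℝ, ‖A⁻¹ *ᵥ v‖ ≤ K * ‖v‖)
    (qk pk : ℝ)
    (f : (Fin n → ℝ) → Fin n → ℝ)
    (hf0 : ∀ w, f w ⟨0, by omega⟩ = qk)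
    (hflast : ∀ w, f w ⟨n - 1, by omega⟩ = pk)
    (hfmid : ∀ w, ∀ p : Fin n, 1 ≤ (p : ℕ) → (p : ℕ) ≤ n - 2 →
      f w p = h * ∑ j, b j * deriv V (∑ i, w i * φ i (c j * h)) * φ p (c j * h))
    (Φ : (Fin n → ℝ) → Fin n → ℝ) (hΦ : ∀ w, Φ w = A⁻¹ *ᵥ f w)
    (hcontr : ∀ j : Fin m, ∀ p : Fin n, 1 ≤ (p : ℕ) → (p : ℕ) ≤ n - 2 →
      h * K * LV * ((∑ i, |φ i (c j * h)|) * |φ p (c j * h)|) < 1) :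
    (∃ k : ℝ, 0 ≤ k ∧ k < 1 ∧ ∀ w v : Fin n → ℝ, ‖Φ w - Φ v‖ ≤ k * ‖w - v‖) ∧
      ∃! q : Fin n → ℝ, A *ᵥ q = f q := by
  have hn0 : 0 < n := by omega
  haveI : Nonempty (Fin n) := ⟨⟨0, hn0⟩⟩
  -- K is nonnegative
  have hK0 : 0 ≤ K := by
    have h1 := hK (fun _ => 1)
    have h2 : (0:ℝ) < ‖(fun _ => (1:ℝ) : Fin n → ℝ)‖ := by
      have : (fun _ => (1:ℝ) : Fin n → ℝ) ≠ 0 := by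
        intro hne
        have := congrFun hne ⟨0, hn0⟩
        simpa using this
      exact norm_pos_iff.mpr this
    nlinarith [norm_nonneg (A⁻¹ *ᵥ (fun _ => (1:ℝ) : Fin n → ℝ))]
  -- LV is nonnegative
  have hLV0 : 0 ≤ LV := by
    have h1 := hLV 0 1
    have := abs_nonneg (deriv V 0 - deriv V 1)
    simp only [zero_sub, abs_neg, abs_one, mul_one] at h1
    linarith
  -- bound on the difference of potentials
  have hVdiff : ∀ (w v : Fin n → ℝ) (j : Fin m),
      |deriv V (∑ i, w i * φ i (c j * h)) - deriv V (∑ i, v i * φ i (c j * h))|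
        ≤ LV * (‖w - v‖ * ∑ i, |φ i (c j * h)|) := by
    intro w v j
    refine le_trans (hLV _ _) (mul_le_mul_of_nonneg_left ?_ hLV0)
    calc |∑ i, w i * φ i (c j * h) - ∑ i, v i * φ i (c j * h)|
        = |∑ i, (w i - v i) * φ i (c j * h)| := by
          rw [← Finset.sum_sub_distrib]
          congr 1
          refine Finset.sum_congr rfl fun i _ => ?_
          ring
      _ ≤ ∑ i, |(w i - v i) * φ i (c j * h)| := Finset.abs_sum_le_sum_abs _ _
      _ ≤ ∑ i, ‖w - v‖ * |φ i (c j * h)| := by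
          refine Finset.sum_le_sum fun i _ => ?_
          rw [abs_mul]
          refine mul_le_mul_of_nonneg_right ?_ (abs_nonneg _)
          simpa [Real.norm_eq_abs] using norm_le_pi_norm (w - v) i
      _ = ‖w - v‖ * ∑ i, |φ i (c j * h)| := by rw [Finset.mul_sum]
  -- bound on middle coordinates of f w - f v
  have hmid : ∀ (w v : Fin n → ℝ) (p : Fin n), 1 ≤ (p : ℕ) → (p : ℕ) ≤ n - 2 → ∀ B : ℝ,
      (∀ j : Fin m, (∑ i, |φ i (c j * h)|) * |φ p (c j * h)| ≤ B) →
      |f w p - f v p| ≤ h * LV * B * ‖w - v‖ := by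
    intro w v p hp1 hp2 B hB
    rw [hfmid w p hp1 hp2, hfmid v p hp1 hp2, ← mul_sub, ← Finset.sum_sub_distrib]
    rw [abs_mul, abs_of_pos hh]
    have key : ∀ j : Fin m,
        |b j * deriv V (∑ i, w i * φ i (c j * h)) * φ p (c j * h)
          - b j * deriv V (∑ i, v i * φ i (c j * h)) * φ p (c j * h)|
        ≤ b j * (LV * B * ‖w - v‖) := by
      intro j
      have : b j * deriv V (∑ i, w i * φ i (c j * h)) * φ p (c j * h)
          - b j * deriv V (∑ i, v i * φ i (c j * h)) * φ p (c j * h)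
          = b j * ((deriv V (∑ i, w i * φ i (c j * h))
              - deriv V (∑ i, v i * φ i (c j * h))) * φ p (c j * h)) := by ring
      rw [this, abs_mul, abs_mul, abs_of_pos (hb j)]
      refine mul_le_mul_of_nonneg_left ?_ (hb j).le
      calc |deriv V (∑ i, w i * φ i (c j * h)) - deriv V (∑ i, v i * φ i (c j * h))|
            * |φ p (c j * h)|
          ≤ (LV * (‖w - v‖ * ∑ i, |φ i (c j * h)|)) * |φ p (c j * h)| :=
            mul_le_mul_of_nonneg_right (hVdiff w v j) (abs_nonneg _)
        _ = (LV * ‖w - v‖) * ((∑ i, |φ i (c j * h)|) * |φ p (c j * h)|) := by ring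
        _ ≤ (LV * ‖w - v‖) * B := by
            refine mul_le_mul_of_nonneg_left (hB j) ?_
            exact mul_nonneg hLV0 (norm_nonneg _)
        _ = LV * B * ‖w - v‖ := by ring
    calc h * |∑ j, (b j * deriv V (∑ i, w i * φ i (c j * h)) * φ p (c j * h)
          - b j * deriv V (∑ i, v i * φ i (c j * h)) * φ p (c j * h))|
        ≤ h * ∑ j, b j * (LV * B * ‖w - v‖) := by
          refine mul_le_mul_of_nonneg_left ?_ hh.le
          exact le_trans (Finset.abs_sum_le_sum_abs _ _) (Finset.sum_le_sum fun j _ => key j)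
      _ = h * LV * B * ‖w - v‖ := by
          rw [← Finset.sum_mul, hbsum]; ring
  -- global bound on ‖f w - f v‖
  have hfbound : ∀ B : ℝ, 0 ≤ B →
      (∀ (j : Fin m) (p : Fin n), 1 ≤ (p : ℕ) → (p : ℕ) ≤ n - 2 →
        (∑ i, |φ i (c j * h)|) * |φ p (c j * h)| ≤ B) →
      ∀ w v : Fin n → ℝ, ‖f w - f v‖ ≤ h * LV * B * ‖w - v‖ := by
    intro B hB0 hB w v
    have hC0 : 0 ≤ h * LV * B * ‖w - v‖ := by
      have := norm_nonneg (w - v)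
      positivity
    rw [pi_norm_le_iff_of_nonneg hC0]
    intro p
    rw [Pi.sub_apply, Real.norm_eq_abs]
    by_cases hp0 : (p : ℕ) = 0
    · have hp : p = ⟨0, hn0⟩ := Fin.ext hp0
      rw [hp, hf0, hf0]
      simpa using hC0
    by_cases hpl : (p : ℕ) = n - 1
    · have hp : p = ⟨n - 1, by omega⟩ := Fin.ext hpl
      rw [hp, hflast, hflast]
      simpa using hC0
    have hp1 : 1 ≤ (p : ℕ) := by omega
    have hp2 : (p : ℕ) ≤ n - 2 := by have := p.isLt; omega
    exact hmid w v p hp1 hp2 B fun j => hB j p hp1 hp2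
  -- choice of B
  obtain ⟨B, hB0, hB, hklt⟩ : ∃ B : ℝ, 0 ≤ B ∧
      (∀ (j : Fin m) (p : Fin n), 1 ≤ (p : ℕ) → (p : ℕ) ≤ n - 2 →
        (∑ i, |φ i (c j * h)|) * |φ p (c j * h)| ≤ B) ∧ h * K * LV * B < 1 := by
    by_cases hn3 : 3 ≤ n
    · set S : Finset (Fin m × Fin n) :=
        Finset.univ ×ˢ (Finset.univ.filter fun p : Fin n => 1 ≤ (p : ℕ) ∧ (p : ℕ) ≤ n - 2)
        with hS
      have hmem : ∀ jp : Fin m × Fin n, jp ∈ S ↔ 1 ≤ (jp.2 : ℕ) ∧ (jp.2 : ℕ) ≤ n - 2 := by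
        intro jp
        simp [hS, Finset.mem_product]
      have hSne : S.Nonempty := by
        refine ⟨(⟨0, by omega⟩, ⟨1, by omega⟩), ?_⟩
        rw [hmem]
        constructor <;> simp <;> omega
      set g : Fin m × Fin n → ℝ :=
        fun jp => (∑ i, |φ i (c jp.1 * h)|) * |φ jp.2 (c jp.1 * h)| with hg
      refine ⟨S.sup' hSne g, ?_, ?_, ?_⟩
      · obtain ⟨jp, hjp⟩ := hSne
        refine le_trans ?_ (Finset.le_sup' g hjp)
        have : 0 ≤ g jp := by
          rw [hg]
          exact mul_nonneg (Finset.sum_nonneg fun i _ => abs_nonneg _) (abs_nonneg _)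
        exact this
      · intro j p hp1 hp2
        exact Finset.le_sup' g ((hmem (j, p)).mpr ⟨hp1, hp2⟩)
      · obtain ⟨jp, hjp, hEq⟩ := Finset.exists_mem_eq_sup' hSne g
        rw [hEq]
        obtain ⟨hp1, hp2⟩ := (hmem jp).mp hjp
        exact hcontr jp.1 jp.2 hp1 hp2
    · have hn2 : n = 2 := by omega
      refine ⟨0, le_refl _, ?_, by simp⟩
      intro j p hp1 hp2
      exact absurd hp2 (by omega)
  set k : ℝ := h * K * LV * B with hk
  have hk0 : 0 ≤ k := by
    rw [hk]
    exact mul_nonneg (mul_nonneg (mul_nonneg hh.le hK0) hLV0) hB0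
  -- Lipschitz estimate for Φ
  have hlip : ∀ w v : Fin n → ℝ, ‖Φ w - Φ v‖ ≤ k * ‖w - v‖ := by
    intro w v
    calc ‖Φ w - Φ v‖ = ‖A⁻¹ *ᵥ (f w - f v)‖ := by
          rw [hΦ, hΦ, Matrix.mulVec_sub]
      _ ≤ K * ‖f w - f v‖ := hK _
      _ ≤ K * (h * LV * B * ‖w - v‖) :=
          mul_le_mul_of_nonneg_left (hfbound B hB0 hB w v) hK0
      _ = k * ‖w - v‖ := by rw [hk]; ring
  refine ⟨⟨k, hk0, hklt, hlip⟩, ?_⟩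
  -- fixed point equation
  have hiff : ∀ q : Fin n → ℝ, A *ᵥ q = f q ↔ Φ q = q := by
    intro q
    rw [hΦ]
    constructor
    · intro hq
      rw [← hq, Matrix.mulVec_mulVec, Matrix.nonsing_inv_mul A hA, Matrix.one_mulVec]
    · intro hq
      conv_lhs => rw [← hq]
      rw [Matrix.mulVec_mulVec, Matrix.mul_nonsing_inv A hA, Matrix.one_mulVec]
  have hC : ContractingWith ⟨k, hk0⟩ Φ := by
    constructor
    · exact_mod_cast hklt
    · exact LipschitzWith.of_dist_le_mul fun w v => by
        rw [dist_eq_norm, dist_eq_norm]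
        exact hlip w v
  refine ⟨ContractingWith.fixedPoint Φ hC, ?_, ?_⟩
  · exact (hiff _).mpr hC.fixedPoint_isFixedPt
  · intro y hy
    exact hC.fixedPoint_unique ((hiff y).mp hy)
end

section
/- Let h > 0, d ∈ ℕ, p ∈ ℕ, and L : ℝ^d × ℝ^d → ℝ. Let C₁, C₂ ≥ 0, C_σ > 0. Fix a quadrature rule with nodes c_1,…,c_m ∈ [0,1] and weights b_1,…,b_m. Let q̄, q̃ : [0,h] → ℝ^d be C¹ curves with q̃(0) = q̄(0) and q̃(h) = q̄(h). Suppose: (i) |∫₀ʰ L(q̄(t),q̄'(t)) dt − h·Σ_{j=1}^m b_j L(q̃(c_j h), q̃'(c_j h))| ≤ C₁ h^{p+1}; (ii) |∫₀ʰ L(q̃(t),q̃'(t)) dt − h·Σ_{j=1}^m b_j L(q̃(c_j h), q̃'(c_j h))| ≤ C₂ h^{p+1}; (iii) ∫₀ʰ L(q̃(t),q̃'(t)) dt − ∫₀ʰ L(q̄(t),q̄'(t)) dt ≥ C_σ ‖q̃ − q̄‖_{1,1}². Then ‖q̃ − q̄‖_{1,1} ≤ √((C₁ + C₂)/C_σ)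 · h^{(p+1)/2}; i.e., if the discrete Lagrangian flow map has error O(h^{p+1}), the Galerkin curve has error at most O(h^{(p+1)/2}) in the W^{1,1} norm. -/
open scoped BigOperators

/-- **Convergence of Galerkin curves with `h`-refinement**: if the discrete Lagrangian
error is `O(h^{p+1})` (hypothesis (i)), the quadrature error on the Galerkin curve is
`O(h^{p+1})` (hypothesis (ii)), and the action grows quadratically at the exact
solution `q̄` in the `W^{1,1}` norm (hypothesis (iii), coercivity with constant
independent of `h`), then the Galerkin curve `q̃` has error at most `O(h^{(p+1)/2})`
in the `W^{1,1}` norm.  The exponent `(p+1)/2` is a real power (`Real.rpow`). -/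
theorem galerkin_curve_h_refinement_convergence
    (h : ℝ) (hh : 0 < h) (d p : ℕ)
    (L : EuclideanSpace ℝ (Fin d) → EuclideanSpace ℝ (Fin d) → ℝ)
    (C₁ C₂ Cσ : ℝ) (hC₁ : 0 ≤ C₁) (hC₂ : 0 ≤ C₂) (hCσ : 0 < Cσ)
    (m : ℕ) (c : Fin m → ℝ) (hc : ∀ j, c j ∈ Set.Icc (0 : ℝ) 1) (b : Fin m → ℝ)
    (qbar qtil : ℝ → EuclideanSpace ℝ (Fin d))
    (hqbar : ContDiff ℝ 1 qbar) (hqtil : ContDiff ℝ 1 qtil)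
    (hend0 : qtil 0 = qbar 0) (hendh : qtil h = qbar h)
    (hi : |(∫ t in (0 : ℝ)..h, L (qbar t) (deriv qbar t)) -
        h * ∑ j, b j * L (qtil (c j * h)) (deriv qtil (c j * h))| ≤ C₁ * h ^ (p + 1))
    (hii : |(∫ t in (0 : ℝ)..h, L (qtil t) (deriv qtil t)) -
        h * ∑ j, b j * L (qtil (c j * h)) (deriv qtil (c j * h))| ≤ C₂ * h ^ (p + 1))
    (hiii : Cσ * ((∫ t in (0 : ℝ)..h, ‖qtil t - qbar t‖) +
          ∫ t in (0 : ℝ)..h, ‖deriv qtil t - deriv qbar t‖) ^ 2 ≤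
        (∫ t in (0 : ℝ)..h, L (qtil t) (deriv qtil t)) -
          ∫ t in (0 : ℝ)..h, L (qbar t) (deriv qbar t)) :
    (∫ t in (0 : ℝ)..h, ‖qtil t - qbar t‖) +
        (∫ t in (0 : ℝ)..h, ‖deriv qtil t - deriv qbar t‖) ≤
      Real.sqrt ((C₁ + C₂) / Cσ) * h ^ (((p : ℝ) + 1) / 2) := by
  set N := (∫ t in (0 : ℝ)..h, ‖qtil t - qbar t‖) +
      ∫ t in (0 : ℝ)..h, ‖deriv qtil t - deriv qbar t‖ with hN
  have key : Cσ * N ^ 2 ≤ (C₁ + C₂) * h ^ (p + 1) := by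
    refine le_trans hiii ?_
    calc (∫ t in (0 : ℝ)..h, L (qtil t) (deriv qtil t)) -
          ∫ t in (0 : ℝ)..h, L (qbar t) (deriv qbar t)
        ≤ |((∫ t in (0 : ℝ)..h, L (qtil t) (deriv qtil t)) -
            h * ∑ j, b j * L (qtil (c j * h)) (deriv qtil (c j * h)))| +
          |((∫ t in (0 : ℝ)..h, L (qbar t) (deriv qbar t)) -
            h * ∑ j, b j * L (qtil (c j * h)) (deriv qtil (c j * h)))| := by
          have h1 := le_abs_self ((∫ t in (0 : ℝ)..h, L (qtil t) (deriv qtil t)) -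
            h * ∑ j, b j * L (qtil (c j * h)) (deriv qtil (c j * h)))
          have h2 := neg_abs_le ((∫ t in (0 : ℝ)..h, L (qbar t) (deriv qbar t)) -
            h * ∑ j, b j * L (qtil (c j * h)) (deriv qtil (c j * h)))
          linarith
      _ ≤ C₂ * h ^ (p + 1) + C₁ * h ^ (p + 1) := add_le_add hii hi
      _ = (C₁ + C₂) * h ^ (p + 1) := by ring
  have hNsq : N ^ 2 ≤ (C₁ + C₂) / Cσ * h ^ (p + 1) := by
    rw [div_mul_eq_mul_div, le_div_iff₀ hCσ]
    linarith [key]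
  have hrpow : (h : ℝ) ^ (p + 1) = (h ^ (((p : ℝ) + 1) / 2)) ^ 2 := by
    rw [← Real.rpow_natCast h (p + 1), ← Real.rpow_natCast _ 2,
      ← Real.rpow_mul hh.le]
    norm_num
  refine le_of_sq_le_sq ?_ (by positivity)
  rw [mul_pow, Real.sq_sqrt (by positivity : (0:ℝ) ≤ (C₁ + C₂) / Cσ)]
  rw [hrpow] at hNsq; exact hNsq
end

section
/- Let h > 0, d ∈ ℕ, and let L : ℝ^d × ℝ^d → ℝ be C¹. Let q̄ : [0,h] → ℝ^d be a C¹ curve that solves the Euler–Lagrange equations of L. Let φ₁ : [0,h] → ℝ be C¹ with φ₁(0) = 1 and φ₁(h) = 0. Define g : [0,h] → ℝ^d by g(t) = D₁L(q̄(t),q̄'(t))·φ₁(t) + D₂L(q̄(t),q̄'(t))·φ₁'(t). Then ∫₀ʰ g(t) dt = −D₂L(q̄(0),q̄'(0)). Consequently, for any quadrature rule with nodes c_j ∈ [0,1] and weights b_j whose quadrature error on g satisfies |h·Σ_{j=1}^m b_j g(c_j h) − ∫₀ʰ g(t) dt| ≤ η, and for any vector a ∈ ℝ^d with |a| ≤ C_a,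 the discrete Noether quantity I_d = −( h·Σ_{j=1}^m b_j g(c_j h) )ᵀ a satisfies |I_d − (D₂L(q̄(0),q̄'(0)))ᵀ a| ≤ C_a·η; i.e., the discrete Noether quantity differs from the true Noether quantity p̄(0)ᵀa evaluated on the exact solution by at most the quadrature error times the bound on the infinitesimal generator. -/
/-!
Along a solution of the Euler–Lagrange equations, `φ₁ • D₁L + φ₁' • D₂L` is the derivative of
`φ₁ • p` with `p = D₂L(q, q')`, so its integral over `[0, h]` telescopes to
`φ₁ h • p h - φ₁ 0 • p 0 = -p 0`. The Noether error is then the quadrature error evaluated at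
`a`, which the operator norm bounds by `‖a‖` times the quadrature error.
-/

open Set

section PartialDerivative

variable {𝕜 : Type*} [NontriviallyNormedField 𝕜]
  {E F G : Type*} [NormedAddCommGroup E] [NormedSpace 𝕜 E] [NormedAddCommGroup F] [NormedSpace 𝕜 F]
  [NormedAddCommGroup G] [NormedSpace 𝕜 G]

theorem fderiv_partial_fst_eq_comp_inl {f : E → F → G} {x : E} {y : F}
    (hf : DifferentiableAt 𝕜 (fun p : E × F => f p.1 p.2) (x, y)) :
    fderiv 𝕜 (fun u => f u y) x =
      (fderiv 𝕜 (fun p : E × F => f p.1 p.2) (x, y)).comp (ContinuousLinearMap.inl 𝕜 E F) := by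
  exact (hf.hasFDerivAt.comp x (hasFDerivAt_prodMk_left (𝕜 := 𝕜) x y)).fderiv

theorem ContDiff.continuous_fderiv_partial_fst {X : Type*} [TopologicalSpace X] {f : E → F → G}
    (hf : ContDiff 𝕜 1 fun p : E × F => f p.1 p.2) {x : X → E} {y : X → F}
    (hx : Continuous x) (hy : Continuous y) :
    Continuous fun t => fderiv 𝕜 (fun u => f u (y t)) (x t) := by
  simp only [fun t => fderiv_partial_fst_eq_comp_inl (hf.differentiable one_ne_zero (x t, y t))]
  exact ((hf.continuous_fderiv one_ne_zero).comp (hx.prodMk hy)).clm_comp continuous_const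

end PartialDerivative

theorem ContinuousLinearMap.norm_apply_sub_apply_le {𝕜 E F : Type*} [NontriviallyNormedField 𝕜]
    [NormedAddCommGroup E] [NormedSpace 𝕜 E] [NormedAddCommGroup F] [NormedSpace 𝕜 F]
    {A B : E →L[𝕜] F} {η C : ℝ} {x : E} (hAB : ‖A - B‖ ≤ η) (hx : ‖x‖ ≤ C) :
    ‖A x - B x‖ ≤ C * η :=
  calc ‖A x - B x‖ = ‖(A - B) x‖ := rfl
    _ ≤ ‖A - B‖ * ‖x‖ := (A - B).le_opNorm x
    _ ≤ η * C := mul_le_mul hAB hx (norm_nonneg x) ((norm_nonneg _).trans hAB)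
    _ = C * η := mul_comm η C

namespace Lagrangian

variable {E : Type*} [NormedAddCommGroup E] [NormedSpace ℝ E]

/-- `D₂L(q t, q' t)`, the momentum `p t` along the curve `q`. -/
noncomputable def momentum (L : E → E → ℝ) (q : ℝ → E) (t : ℝ) : E →L[ℝ] ℝ :=
  fderiv ℝ (fun v => L (q t) v) (deriv q t)

/-- `D₁L(q t, q' t)`. -/
noncomputable def force (L : E → E → ℝ) (q : ℝ → E) (t : ℝ) : E →L[ℝ] ℝ :=
  fderiv ℝ (fun u => L u (deriv q t)) (q t)

theorem continuous_force {L : E → E → ℝ} (hL : ContDiff ℝ 1 fun p : E × E => L p.1 p.2)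
    {q : ℝ → E} (hq : ContDiff ℝ 1 q) : Continuous (force L q) :=
  hL.continuous_fderiv_partial_fst hq.continuous (hq.continuous_deriv le_rfl)

theorem integral_smul_force_add_deriv_smul_momentum {L : E → E → ℝ}
    (hL : ContDiff ℝ 1 fun p : E × E => L p.1 p.2) {q : ℝ → E} (hq : ContDiff ℝ 1 q)
    {a b : ℝ} (hab : a ≤ b)
    (hEL : ∀ t ∈ Icc a b, HasDerivAt (momentum L q) (force L q t) t)
    {φ : ℝ → ℝ} (hφ : ContDiff ℝ 1 φ) :
    ∫ t in a..b, φ t • force L q t + deriv φ t • momentum L q t =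
      φ b • momentum L q b - φ a • momentum L q a := by
  rw [← uIcc_of_le hab] at hEL
  have hφ' := hφ.differentiable one_ne_zero
  refine intervalIntegral.integral_eq_sub_of_hasDerivAt
    (fun t ht => (hφ' t).hasDerivAt.smul (hEL t ht)) (ContinuousOn.intervalIntegrable ?_)
  exact (hφ.continuous.continuousOn.smul (continuous_force hL hq).continuousOn).add
    ((hφ.continuous_deriv le_rfl).continuousOn.smul
      fun t ht => (hEL t ht).continuousAt.continuousWithinAt)

end Lagrangian

open Lagrangian in
/-- **Error between the discrete Noether quantity and the true Noether quantity on the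
exact solution.**  With `g(t) = D₁L(q̄,q̄')·φ₁(t) + D₂L(q̄,q̄')·φ₁'(t)` (a covector-valued
map) along an Euler–Lagrange solution `q̄`, and `φ₁(0) = 1`, `φ₁(h) = 0`, one has
`∫₀ʰ g = −D₂L(q̄(0), q̄'(0))`; consequently for any quadrature rule whose error on `g`
is at most `η` and any `a` with `‖a‖ ≤ C_a`, the discrete Noether quantity
`I_d = −(h·Σ_j b_j g(c_j h)) a` satisfies `|I_d − D₂L(q̄(0),q̄'(0)) a| ≤ C_a·η`. -/
theorem discrete_noether_error_bound
    (h : ℝ) (hh : 0 < h) (d : ℕ)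
    (L : EuclideanSpace ℝ (Fin d) → EuclideanSpace ℝ (Fin d) → ℝ)
    (hL : ContDiff ℝ 1 fun p : EuclideanSpace ℝ (Fin d) × EuclideanSpace ℝ (Fin d) =>
      L p.1 p.2)
    (qbar : ℝ → EuclideanSpace ℝ (Fin d)) (hqbar : ContDiff ℝ 1 qbar)
    (hEL : ∀ t ∈ Set.Icc (0 : ℝ) h,
      HasDerivAt (fun s => fderiv ℝ (fun v => L (qbar s) v) (deriv qbar s))
        (fderiv ℝ (fun u => L u (deriv qbar t)) (qbar t)) t)
    (φ₁ : ℝ → ℝ) (hφ₁ : ContDiff ℝ 1 φ₁) (hφ₁0 : φ₁ 0 = 1) (hφ₁h : φ₁ h = 0)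
    (g : ℝ → EuclideanSpace ℝ (Fin d) →L[ℝ] ℝ)
    (hg : ∀ t, g t = φ₁ t • fderiv ℝ (fun u => L u (deriv qbar t)) (qbar t) +
      deriv φ₁ t • fderiv ℝ (fun v => L (qbar t) v) (deriv qbar t)) :
    (∫ t in (0 : ℝ)..h, g t) = -(fderiv ℝ (fun v => L (qbar 0) v) (deriv qbar 0)) ∧
      ∀ (m : ℕ) (c b : Fin m → ℝ), (∀ j, c j ∈ Set.Icc (0 : ℝ) 1) →
        ∀ η : ℝ, ‖(h • ∑ j, b j • g (c j * h)) - ∫ t in (0 : ℝ)..h, g t‖ ≤ η →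
        ∀ (Ca : ℝ) (a : EuclideanSpace ℝ (Fin d)), ‖a‖ ≤ Ca →
          |(-(h • ∑ j, b j • g (c j * h))) a -
              (fderiv ℝ (fun v => L (qbar 0) v) (deriv qbar 0)) a| ≤ Ca * η := by
  obtain rfl : g = fun t => φ₁ t • force L qbar t + deriv φ₁ t • momentum L qbar t := funext hg
  have hint : ∫ t in (0 : ℝ)..h, φ₁ t • force L qbar t + deriv φ₁ t • momentum L qbar t =
      -momentum L qbar 0 := by
    rw [integral_smul_force_add_deriv_smul_momentum hL hqbar hh.le hEL hφ₁, hφ₁h, hφ₁0,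
      zero_smul, one_smul, zero_sub]
  refine ⟨hint, fun m c b _ η hη Ca a ha => ?_⟩
  rw [hint, sub_neg_eq_add, ← norm_neg, neg_add'] at hη
  rw [← Real.norm_eq_abs]
  exact ContinuousLinearMap.norm_apply_sub_apply_le hη ha
end
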